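/- Let (X, m) be a probability space with a measure-preserving ℤⁿ-action, let U = ⊔_{z ∈ Q_h} T^z B be a Rokhlin tower of height h, and let N < h. Define Δ_in = {x ∈ U : T^z x ∉ U for some z ∈ Q_N}. Then m(Δ_in) ≤ m(U) · (1 − (h − N)ⁿ / hⁿ). -/

import Mathlib

open MeasureTheory Filter

/-- The cube `Q_h = {z ∈ ℤⁿ : 1 ≤ z_i ≤ h}`. -/
noncomputable def cube (n h : ℕ) : Finset (Fin n → ℤ) := Finset.Icc 1 (fun _ => (h : ℤ))

set_option autoImplicit false

/-!
The levels `T^w B` with `w ∈ Q_{h-N}` form a sub-tower `G ⊆ U` of measure `(h-N)ⁿ m(B)`, while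
`m(U) = hⁿ m(B)`. Since `Q_N + Q_{h-N} ⊆ Q_h`, every point of `G` stays in `U` under all shifts
`T^z`, `z ∈ Q_N`; hence `Δ_in ⊆ U \ G` and `m(Δ_in) ≤ (hⁿ - (h-N)ⁿ) m(B)`.
-/

lemma card_cube (n h : ℕ) : (cube n h).card = h ^ n := by
  simp [cube, Pi.card_Icc, Int.card_Icc]

lemma cube_mono (n : ℕ) : Monotone (cube n) := fun _ _ hab =>
  Finset.Icc_subset_Icc le_rfl fun _ => Nat.cast_le.mpr hab

lemma add_mem_cube {n a b : ℕ} {z w : Fin n → ℤ} (hz : z ∈ cube n a) (hw : w ∈ cube n b) :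
    z + w ∈ cube n (a + b) := by
  simp only [cube, Finset.mem_Icc, Pi.le_def, Pi.add_apply, Pi.one_apply] at hz hw ⊢
  push_cast
  exact ⟨fun i => by linarith [hz.1 i, hw.1 i], fun i => by linarith [hz.2 i, hw.2 i]⟩

section Action

variable {G X : Type*} [AddGroup G] {T : G → X → X}

lemma image_eq_preimage_neg (hact : ∀ z w x, T (z + w) x = T z (T w x)) (hid : ∀ x, T 0 x = x)
    (z : G) (s : Set X) : T z '' s = T (-z) ⁻¹' s := by
  refine congrFun (Set.image_eq_preimage_of_inverse (fun x => ?_) (fun x => ?_)) s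
  · rw [← hact, neg_add_cancel, hid]
  · rw [← hact, add_neg_cancel, hid]

variable [MeasurableSpace X] {m : Measure X} [IsFiniteMeasure m]

lemma measureReal_biUnion_image (hmp : ∀ z, MeasurePreserving (T z) m m)
    (hact : ∀ z w x, T (z + w) x = T z (T w x)) (hid : ∀ x, T 0 x = x)
    {B : Set X} (hB : MeasurableSet B) {S : Finset G}
    (hS : (S : Set G).PairwiseDisjoint fun z => T z '' B) :
    m.real (⋃ z ∈ S, T z '' B) = S.card * m.real B := by
  simp_rw [image_eq_preimage_neg hact hid] at hS ⊢
  rw [measureReal_biUnion_finset hS fun z _ => (hmp (-z)).measurable hB]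
  simp [measureReal_def, (hmp _).measure_preimage hB.nullMeasurableSet]

end Action

theorem stmt_3_general {X : Type*} [MeasurableSpace X] (m : Measure X) [IsProbabilityMeasure m]
    (n : ℕ) (T : (Fin n → ℤ) → X → X)
    (hmp : ∀ z, MeasurePreserving (T z) m m)
    (hact : ∀ z w x, T (z + w) x = T z (T w x)) (hid : ∀ x, T 0 x = x)
    (h N : ℕ) (hNh : N < h)
    (B : Set X) (hB : MeasurableSet B)
    (hdisj : ∀ z ∈ cube n h, ∀ w ∈ cube n h, z ≠ w → Disjoint (T z '' B) (T w '' B))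
    (U : Set X) (hU : U = ⋃ z ∈ cube n h, T z '' B)
    (Δin : Set X) (hΔ : Δin = {x | x ∈ U ∧ ∃ z ∈ cube n N, T z x ∉ U}) :
    (m Δin).toReal ≤ (m U).toReal * (1 - ((h : ℝ) - N) ^ n / (h : ℝ) ^ n) := by
  have hsub : cube n (h - N) ⊆ cube n h := cube_mono n (Nat.sub_le h N)
  have measureReal_tower {S} (hS : S ⊆ cube n h) :
      m.real (⋃ z ∈ S, T z '' B) = S.card * m.real B :=
    measureReal_biUnion_image hmp hact hid hB fun z hz w hw => hdisj z (hS hz) w (hS hw)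
  set core := ⋃ w ∈ cube n (h - N), T w '' B
  have hcore : core ⊆ U := hU ▸ Set.biUnion_subset_biUnion_left (by exact_mod_cast hsub)
  have hΔcore : Δin ⊆ U \ core := by
    rw [hΔ]
    rintro x ⟨hxU, z, hz, hzx⟩
    refine ⟨hxU, fun hx => hzx ?_⟩
    obtain ⟨w, hw, b, hb, rfl⟩ := Set.mem_iUnion₂.mp hx
    rw [hU, ← hact]
    exact Set.mem_biUnion (by simpa [hNh.le] using add_mem_cube hz hw) ⟨b, hb, rfl⟩
  have hcore_meas : MeasurableSet core := Finset.measurableSet_biUnion _ fun w _ => by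
    rw [image_eq_preimage_neg hact hid]; exact (hmp _).measurable hB
  have hpos : (0 : ℝ) < (h : ℝ) ^ n := pow_pos (Nat.cast_pos.mpr (N.zero_le.trans_lt hNh)) n
  calc m.real Δin ≤ m.real (U \ core) := measureReal_mono hΔcore
    _ = m.real U - m.real core := measureReal_sdiff hcore hcore_meas
    _ = (m U).toReal * (1 - ((h : ℝ) - N) ^ n / (h : ℝ) ^ n) := by
      rw [← measureReal_def, hU, measureReal_tower le_rfl, measureReal_tower hsub, card_cube,
        card_cube]
      push_cast [Nat.cast_sub hNh.le]
      field_simp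

theorem stmt_3 {X : Type*} [MeasurableSpace X] (m : Measure X) [IsProbabilityMeasure m]
    (n : ℕ) (T : (Fin n → ℤ) → X → X)
    (hmp : ∀ z, MeasurePreserving (T z) m m)
    (hact : ∀ z w x, T (z + w) x = T z (T w x)) (hid : ∀ x, T 0 x = x)
    (h N : ℕ) (hN : 1 ≤ N) (hNh : N < h)
    (B : Set X) (hB : MeasurableSet B)
    (hdisj : ∀ z ∈ cube n h, ∀ w ∈ cube n h, z ≠ w → Disjoint (T z '' B) (T w '' B))
    (U : Set X) (hU : U = ⋃ z ∈ cube n h, T z '' B)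
    (Δin : Set X) (hΔ : Δin = {x | x ∈ U ∧ ∃ z ∈ cube n N, T z x ∉ U}) :
    (m Δin).toReal ≤ (m U).toReal * (1 - ((h : ℝ) - N) ^ n / (h : ℝ) ^ n) :=
  stmt_3_general m n T hmp hact hid h N hNh B hB hdisj U hU Δin hΔ
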